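/- Let Y be a γ-weakly convex geodesic space and f : S^m → Q_Q(Y) a Lipschitz multiple-valued function. Then f extends to a Lipschitz function F : B^{m+1} → Q_Q(Y) with Lip(F) ≤ (γ + 8Q − 6)·Lip(f). -/

import Mathlib

/-- A γ-weakly convex geodesic bicombing on a metric space `Y`: a choice of
arc-length geodesic `c x y : [0, dist x y] → Y` from `x` to `y` for every pair,
satisfying the weak convexity inequality with constant `γ`. -/
structure WeakBicombing (Y : Type*) [MetricSpace Y] (γ : ℝ) where
  c : Y → Y → ℝ → Y
  source : ∀ x y, c x y 0 = x
  target : ∀ x y, c x y (dist x y) = y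
  isometry : ∀ x y, ∀ s ∈ Set.Icc (0:ℝ) (dist x y), ∀ t ∈ Set.Icc (0:ℝ) (dist x y),
    dist (c x y s) (c x y t) = |s - t|
  convex : ∀ x y z, ∀ t ∈ Set.Icc (0:ℝ) 1,
    dist (c x y (t * dist x y)) (c x z (t * dist x z)) ≤ γ * t * dist y z

/-- The Almgren distance on Q-tuples: min over permutations of the max distance. -/
noncomputable def qS {Y : Type*} [MetricSpace Y] {Q : ℕ} (x y : Fin Q → Y) : ℝ :=
  sInf {r | ∃ σ : Equiv.Perm (Fin Q), r = ⨆ i, dist (x i) (y (σ i))}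

section Aux
set_option linter.unusedSectionVars false
variable {Y : Type*} [MetricSpace Y] {Q : ℕ} [NeZero Q]

lemma qS_set_eq (x y : Fin Q → Y) :
    {r | ∃ σ : Equiv.Perm (Fin Q), r = ⨆ i, dist (x i) (y (σ i))}
      = Set.range (fun σ : Equiv.Perm (Fin Q) => ⨆ i, dist (x i) (y (σ i))) := by
  ext t; simp [Set.range, eq_comm]

lemma qS_le (x y : Fin Q → Y) (σ : Equiv.Perm (Fin Q)) {r : ℝ}
    (h : ∀ i, dist (x i) (y (σ i)) ≤ r) : qS x y ≤ r := by
  haveI : Nonempty (Fin Q) := ⟨⟨0, Nat.pos_of_ne_zero (NeZero.ne Q)⟩⟩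
  refine le_trans (csInf_le ?_ ⟨σ, rfl⟩) (ciSup_le h)
  rw [qS_set_eq]; exact (Set.finite_range _).bddBelow

lemma qS_exists (x y : Fin Q → Y) :
    ∃ σ : Equiv.Perm (Fin Q), ∀ i, dist (x i) (y (σ i)) ≤ qS x y := by
  haveI : Nonempty (Fin Q) := ⟨⟨0, Nat.pos_of_ne_zero (NeZero.ne Q)⟩⟩
  have hfin : ({r | ∃ σ : Equiv.Perm (Fin Q), r = ⨆ i, dist (x i) (y (σ i))}).Finite := by
    rw [qS_set_eq]; exact Set.finite_range _
  have hne : ({r | ∃ σ : Equiv.Perm (Fin Q), r = ⨆ i, dist (x i) (y (σ i))}).Nonempty :=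
    ⟨⨆ i, dist (x i) (y ((1 : Equiv.Perm (Fin Q)) i)), 1, rfl⟩
  have hmem := Set.Nonempty.csInf_mem hne hfin
  obtain ⟨σ, hσ⟩ := hmem
  refine ⟨σ, fun i => ?_⟩
  have := le_ciSup (f := fun i => dist (x i) (y (σ i)))
    (Set.Finite.bddAbove (Set.finite_range _)) i
  rw [qS]; rw [hσ]; exact this

lemma dist_c_left {γ : ℝ} (B : WeakBicombing Y γ) (x y : Y) {u : ℝ}
    (h0 : 0 ≤ u) (h1 : u ≤ dist x y) : dist x (B.c x y u) = u := by
  have h := B.isometry x y 0 ⟨le_refl 0, dist_nonneg⟩ u ⟨h0, h1⟩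
  rw [B.source] at h
  rw [h, zero_sub, abs_neg, abs_of_nonneg h0]

lemma exists_cl (p : Fin Q → Y) {t : ℝ} (ht : 0 ≤ t) :
    ∃ cl : Fin Q → Fin Q,
      (∀ i j, dist (p i) (p j) ≤ t → cl i = cl j) ∧
      (∀ i, dist (p (cl i)) (p i) ≤ t * ((Q : ℝ) - 1)) := by
  classical
  let G : SimpleGraph (Fin Q) :=
    { Adj := fun i j => i ≠ j ∧ dist (p i) (p j) ≤ t
      symm := ⟨by intro i j h; exact ⟨h.1.symm, by rw [dist_comm]; exact h.2⟩⟩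
      loopless := ⟨fun i h => h.1 rfl⟩ }
  have walkbound : ∀ (i j : Fin Q) (w : G.Walk i j), dist (p i) (p j) ≤ t * w.length := by
    intro i j w
    induction w with
    | nil => simp
    | @cons i b j h w ih =>
        have hb : dist (p i) (p b) ≤ t := h.2
        calc dist (p i) (p j) ≤ dist (p i) (p b) + dist (p b) (p j) := dist_triangle _ _ _
          _ ≤ t + t * w.length := add_le_add hb ih
          _ = t * (w.length + 1) := by ring
          _ = t * (SimpleGraph.Walk.cons h w).length := by
              rw [SimpleGraph.Walk.length_cons]; push_cast; ring
  refine ⟨fun i => (G.connectedComponentMk i).out, ?_, ?_⟩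
  · intro i j hd
    by_cases hij : i = j
    · rw [hij]
    · have hr : G.Reachable i j := SimpleGraph.Adj.reachable ⟨hij, hd⟩
      have h1 : G.connectedComponentMk i = G.connectedComponentMk j :=
        SimpleGraph.ConnectedComponent.eq.mpr hr
      simp only [h1]
  · intro i
    have hreach : G.Reachable ((G.connectedComponentMk i).out) i := by
      have h1 : G.connectedComponentMk ((G.connectedComponentMk i).out)
          = G.connectedComponentMk i := (G.connectedComponentMk i).out_eq
      exact SimpleGraph.ConnectedComponent.eq.mp h1
    obtain ⟨w⟩ := hreach
    have h1 := walkbound _ _ w.bypass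
    have h2 : (w.bypass.length : ℝ) ≤ (Q : ℝ) - 1 := by
      have h3 : w.bypass.length < Fintype.card (Fin Q) := w.bypass_isPath.length_lt
      rw [Fintype.card_fin] at h3
      have : (w.bypass.length : ℝ) + 1 ≤ (Q : ℝ) := by exact_mod_cast h3
      linarith
    calc dist (p ((G.connectedComponentMk i).out)) (p i) ≤ t * w.bypass.length := h1
      _ ≤ t * ((Q : ℝ) - 1) := mul_le_mul_of_nonneg_left h2 ht

lemma min_mul_norm_le {n : ℕ} (v w : EuclideanSpace ℝ (Fin n)) (hv : ‖v‖ = 1) (hw : ‖w‖ = 1)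
    {r s : ℝ} (hr : 0 ≤ r) (hs : 0 ≤ s) :
    min r s * ‖v - w‖ ≤ ‖r • v - s • w‖ := by
  have e1 := norm_sub_sq_real (r • v) (s • w)
  have e2 := norm_sub_sq_real v w
  rw [real_inner_smul_left, real_inner_smul_right, norm_smul_of_nonneg hr,
    norm_smul_of_nonneg hs, hv, hw, mul_one, mul_one] at e1
  rw [hv, hw] at e2
  have hm0 : 0 ≤ min r s := le_min hr hs
  have hsq : (min r s * ‖v - w‖) ^ 2 ≤ ‖r • v - s • w‖ ^ 2 := by
    have h1 : min r s * min r s ≤ r * s :=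
      mul_le_mul (min_le_left _ _) (min_le_right _ _) hm0 hr
    nlinarith [sq_nonneg (‖v - w‖), sq_nonneg (r - s)]
  nlinarith [norm_nonneg (r • v - s • w), mul_nonneg hm0 (norm_nonneg (v - w))]

end Aux

set_option maxHeartbeats 2000000 in
/-- if Y is a γ-weakly convex geodesic space, every Lipschitz
multiple-valued function f : S^m → Q_Q(Y) extends to F : B^{m+1} → Q_Q(Y) with
Lip(F) ≤ (γ + 8Q − 6)·Lip(f). -/
theorem stmt8 {Y : Type*} [MetricSpace Y] {γ : ℝ} (hγ : 1 ≤ γ) (B : WeakBicombing Y γ)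
    {m Q : ℕ} [NeZero Q] (K : ℝ) (hK : 0 ≤ K)
    (f : ↥(Metric.sphere (0 : EuclideanSpace ℝ (Fin (m+1))) 1) → Fin Q → Y)
    (hf : ∀ a b, qS (f a) (f b) ≤ K * dist a b) :
    ∃ F : ↥(Metric.closedBall (0 : EuclideanSpace ℝ (Fin (m+1))) 1) → Fin Q → Y,
      (∀ a b, qS (F a) (F b) ≤ (γ + 8 * (Q : ℝ) - 6) * K * dist a b) ∧
      ∀ (v : EuclideanSpace ℝ (Fin (m+1))) (hv : v ∈ Metric.sphere (0 : EuclideanSpace ℝ (Fin (m+1))) 1),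
        (List.ofFn (F ⟨v, Metric.sphere_subset_closedBall hv⟩) : Multiset Y)
          = List.ofFn (f ⟨v, hv⟩) := by
  classical
  haveI : Nonempty (Fin Q) := ⟨⟨0, Nat.pos_of_ne_zero (NeZero.ne Q)⟩⟩
  have hQ1 : (1:ℝ) ≤ (Q:ℝ) := by
    exact_mod_cast Nat.one_le_iff_ne_zero.mpr (NeZero.ne Q)
  have hC0 : (0:ℝ) ≤ γ + 8 * (Q:ℝ) - 6 := by nlinarith
  have hv₀mem : (EuclideanSpace.single (0 : Fin (m+1)) (1:ℝ))
      ∈ Metric.sphere (0 : EuclideanSpace ℝ (Fin (m+1))) 1 := by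
    rw [mem_sphere_zero_iff_norm, EuclideanSpace.norm_single]; norm_num
  set v₀ : ↥(Metric.sphere (0 : EuclideanSpace ℝ (Fin (m+1))) 1) := ⟨_, hv₀mem⟩ with hv₀def
  set p : Fin Q → Y := f v₀ with hp
  obtain ⟨cl, hcl, hclD⟩ := exists_cl p (t := 6*K) (by positivity)
  choose σf hσf using fun v => qS_exists (f v₀) (f v)
  set τ : ↥(Metric.sphere (0 : EuclideanSpace ℝ (Fin (m+1))) 1) → Equiv.Perm (Fin Q) :=
    fun v => (σf v)⁻¹ with hτdef
  have hτ : ∀ v i, dist (p (τ v i)) (f v i) ≤ K * dist v₀ v := by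
    intro v i
    have h := hσf v ((σf v)⁻¹ i)
    rw [Equiv.Perm.coe_inv, Equiv.apply_symm_apply] at h
    exact h.trans (hf v₀ v)
  have hsph2 : ∀ (v w : ↥(Metric.sphere (0 : EuclideanSpace ℝ (Fin (m+1))) 1)), dist v w ≤ 2 := by
    intro v w
    rw [Subtype.dist_eq, dist_eq_norm]
    have hv : ‖(v : EuclideanSpace ℝ (Fin (m+1)))‖ = 1 := mem_sphere_zero_iff_norm.mp v.2
    have hw : ‖(w : EuclideanSpace ℝ (Fin (m+1)))‖ = 1 := mem_sphere_zero_iff_norm.mp w.2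
    calc ‖(v : EuclideanSpace ℝ (Fin (m+1))) - (w : EuclideanSpace ℝ (Fin (m+1)))‖
        ≤ ‖(v : EuclideanSpace ℝ (Fin (m+1)))‖ + ‖(w : EuclideanSpace ℝ (Fin (m+1)))‖ :=
          norm_sub_le _ _
      _ = 2 := by rw [hv, hw]; norm_num
  set M : ℝ := 6*K*((Q:ℝ)-1) + 2*K with hM
  have hM0 : 0 ≤ M := by nlinarith
  have hMC : M ≤ (γ + 8 * (Q:ℝ) - 6) * K := by nlinarith
  set A : ↥(Metric.sphere (0 : EuclideanSpace ℝ (Fin (m+1))) 1) → Fin Q → Y :=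
    fun v i => p (cl (τ v i)) with hA
  have hAf : ∀ v i, dist (A v i) (f v i) ≤ M := by
    intro v i
    have h1 := hclD (τ v i)
    have h2 := hτ v i
    have h3 := hsph2 v₀ v
    have h4 : dist (A v i) (f v i) ≤ dist (p (cl (τ v i))) (p (τ v i)) + dist (p (τ v i)) (f v i) :=
      dist_triangle _ _ _
    have h5 : (0:ℝ) ≤ dist v₀ v := dist_nonneg
    rw [hM]; nlinarith
  have hAcons : ∀ v w i j, dist (f v i) (f w j) ≤ 2*K → A v i = A w j := by
    intro v w i j hd
    have h1 : dist (p (τ v i)) (p (τ w j)) ≤ 6*K := by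
      have t4 : dist (p (τ v i)) (p (τ w j))
          ≤ dist (p (τ v i)) (f v i) + dist (f v i) (f w j) + dist (f w j) (p (τ w j)) :=
        dist_triangle4 _ _ _ _
      have h2 := hτ v i
      have h3 := hτ w j
      rw [dist_comm (f w j)] at t4
      have h5 := hsph2 v₀ v
      have h6 := hsph2 v₀ w
      have h7 : (0:ℝ) ≤ dist v₀ v := dist_nonneg
      have h8 : (0:ℝ) ≤ dist v₀ w := dist_nonneg
      nlinarith
    exact congrArg p (hcl _ _ h1)
  have hmem : ∀ x : EuclideanSpace ℝ (Fin (m+1)), ¬ x = 0 →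
      (‖x‖⁻¹ • x) ∈ Metric.sphere (0 : EuclideanSpace ℝ (Fin (m+1))) 1 := by
    intro x hx
    rw [mem_sphere_zero_iff_norm, norm_smul, norm_inv, norm_norm,
      inv_mul_cancel₀ (norm_ne_zero_iff.mpr hx)]
  refine ⟨fun x => if hx : (x : EuclideanSpace ℝ (Fin (m+1))) = 0 then (fun i => p (cl i))
    else (fun i =>
      B.c (A ⟨‖(x : EuclideanSpace ℝ (Fin (m+1)))‖⁻¹ • (x : EuclideanSpace ℝ (Fin (m+1))), hmem _ hx⟩ i)
        (f ⟨‖(x : EuclideanSpace ℝ (Fin (m+1)))‖⁻¹ • (x : EuclideanSpace ℝ (Fin (m+1))), hmem _ hx⟩ i)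
        (‖(x : EuclideanSpace ℝ (Fin (m+1)))‖ *
          dist (A ⟨‖(x : EuclideanSpace ℝ (Fin (m+1)))‖⁻¹ • (x : EuclideanSpace ℝ (Fin (m+1))), hmem _ hx⟩ i)
            (f ⟨‖(x : EuclideanSpace ℝ (Fin (m+1)))‖⁻¹ • (x : EuclideanSpace ℝ (Fin (m+1))), hmem _ hx⟩ i))),
    ?_, ?_⟩
  · intro a b
    have hd : dist a b = ‖(a : EuclideanSpace ℝ (Fin (m+1))) - (b : EuclideanSpace ℝ (Fin (m+1)))‖ := by
      rw [Subtype.dist_eq, dist_eq_norm]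
    have hd0 : (0:ℝ) ≤ dist a b := dist_nonneg
    have ha1 : ‖(a : EuclideanSpace ℝ (Fin (m+1)))‖ ≤ 1 := mem_closedBall_zero_iff.mp a.2
    have hb1 : ‖(b : EuclideanSpace ℝ (Fin (m+1)))‖ ≤ 1 := mem_closedBall_zero_iff.mp b.2
    by_cases ha : (a : EuclideanSpace ℝ (Fin (m+1))) = 0
    · by_cases hb : (b : EuclideanSpace ℝ (Fin (m+1))) = 0
      · simp only [dif_pos ha, dif_pos hb]
        have h0 : qS (fun i => p (cl i)) (fun i => p (cl i)) ≤ (0:ℝ) :=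
          qS_le _ _ 1 (fun i => by simp)
        exact h0.trans (mul_nonneg (mul_nonneg hC0 hK) hd0)
      · -- a = 0, b ≠ 0
        simp only [dif_pos ha, dif_neg hb]
        set w : ↥(Metric.sphere (0 : EuclideanSpace ℝ (Fin (m+1))) 1) :=
          ⟨_, hmem _ hb⟩ with hwdef
        have hdab : dist a b = ‖(b : EuclideanSpace ℝ (Fin (m+1)))‖ := by
          rw [hd, ha, zero_sub, norm_neg]
        refine qS_le _ _ (τ w)⁻¹ (fun i => ?_)
        have hAw : A w ((τ w)⁻¹ i) = p (cl i) := by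
          rw [hA]; simp only [Equiv.Perm.coe_inv, Equiv.apply_symm_apply]
        rw [hAw]
        have hb0 : (0:ℝ) ≤ ‖(b : EuclideanSpace ℝ (Fin (m+1)))‖ := norm_nonneg _
        have hdist := dist_c_left B (p (cl i)) (f w ((τ w)⁻¹ i))
          (u := ‖(b : EuclideanSpace ℝ (Fin (m+1)))‖ * dist (p (cl i)) (f w ((τ w)⁻¹ i)))
          (mul_nonneg hb0 dist_nonneg) (mul_le_of_le_one_left dist_nonneg hb1)
        rw [hdist, hdab]
        have hlM : dist (p (cl i)) (f w ((τ w)⁻¹ i)) ≤ M := by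
          have := hAf w ((τ w)⁻¹ i); rwa [hAw] at this
        calc ‖(b : EuclideanSpace ℝ (Fin (m+1)))‖ * dist (p (cl i)) (f w ((τ w)⁻¹ i))
            ≤ ‖(b : EuclideanSpace ℝ (Fin (m+1)))‖ * M := mul_le_mul_of_nonneg_left hlM hb0
          _ = M * ‖(b : EuclideanSpace ℝ (Fin (m+1)))‖ := mul_comm _ _
          _ ≤ (γ + 8 * (Q:ℝ) - 6) * K * ‖(b : EuclideanSpace ℝ (Fin (m+1)))‖ :=
              mul_le_mul_of_nonneg_right hMC hb0
    · by_cases hb : (b : EuclideanSpace ℝ (Fin (m+1))) = 0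
      · -- a ≠ 0, b = 0
        simp only [dif_neg ha, dif_pos hb]
        set v : ↥(Metric.sphere (0 : EuclideanSpace ℝ (Fin (m+1))) 1) :=
          ⟨_, hmem _ ha⟩ with hvdef
        have hdab : dist a b = ‖(a : EuclideanSpace ℝ (Fin (m+1)))‖ := by
          rw [hd, hb, sub_zero]
        refine qS_le _ _ (τ v) (fun i => ?_)
        have hAv : A v i = p (cl (τ v i)) := rfl
        have ha0 : (0:ℝ) ≤ ‖(a : EuclideanSpace ℝ (Fin (m+1)))‖ := norm_nonneg _
        have hdist := dist_c_left B (A v i) (f v i)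
          (u := ‖(a : EuclideanSpace ℝ (Fin (m+1)))‖ * dist (A v i) (f v i))
          (mul_nonneg ha0 dist_nonneg) (mul_le_of_le_one_left dist_nonneg ha1)
        rw [dist_comm, hdist, hdab]
        have hlM : dist (A v i) (f v i) ≤ M := hAf v i
        calc ‖(a : EuclideanSpace ℝ (Fin (m+1)))‖ * dist (A v i) (f v i)
            ≤ ‖(a : EuclideanSpace ℝ (Fin (m+1)))‖ * M := mul_le_mul_of_nonneg_left hlM ha0
          _ = M * ‖(a : EuclideanSpace ℝ (Fin (m+1)))‖ := mul_comm _ _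
          _ ≤ (γ + 8 * (Q:ℝ) - 6) * K * ‖(a : EuclideanSpace ℝ (Fin (m+1)))‖ :=
              mul_le_mul_of_nonneg_right hMC ha0
      · -- main case
        simp only [dif_neg ha, dif_neg hb]
        set va : ↥(Metric.sphere (0 : EuclideanSpace ℝ (Fin (m+1))) 1) := ⟨_, hmem _ ha⟩ with hvadef
        set vb : ↥(Metric.sphere (0 : EuclideanSpace ℝ (Fin (m+1))) 1) := ⟨_, hmem _ hb⟩ with hvbdef
        obtain ⟨σ₀, hσ₀⟩ := qS_exists (f va) (f vb)
        have hσ₀' : ∀ i, dist (f va i) (f vb (σ₀ i)) ≤ K * dist va vb :=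
          fun i => (hσ₀ i).trans (hf va vb)
        set r : ℝ := ‖(a : EuclideanSpace ℝ (Fin (m+1)))‖ with hrdef
        set s : ℝ := ‖(b : EuclideanSpace ℝ (Fin (m+1)))‖ with hsdef
        have hr0 : 0 ≤ r := norm_nonneg _
        have hs0 : 0 ≤ s := norm_nonneg _
        set t : ℝ := min r s with htdef
        have ht0 : 0 ≤ t := le_min hr0 hs0
        have ht1 : t ≤ 1 := le_trans (min_le_left _ _) ha1
        have hAeq : ∀ i, A va i = A vb (σ₀ i) := by
          intro i
          refine hAcons _ _ _ _ ((hσ₀' i).trans ?_)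
          have := hsph2 va vb
          nlinarith [dist_nonneg (x := va) (y := vb)]
        refine qS_le _ _ σ₀ (fun i => ?_)
        rw [← hAeq i]
        set x := A va i with hx
        set y1 := f va i with hy1
        set y2 := f vb (σ₀ i) with hy2
        have hl1M : dist x y1 ≤ M := hAf va i
        have hl2M : dist x y2 ≤ M := by
          have := hAf vb (σ₀ i); rwa [← hAeq i] at this
        -- three-term estimate
        have e1 : dist (B.c x y1 (r * dist x y1)) (B.c x y1 (t * dist x y1))
            = |r - t| * dist x y1 := by
          have := B.isometry x y1 (r * dist x y1)
            ⟨mul_nonneg hr0 dist_nonneg, mul_le_of_le_one_left dist_nonneg ha1⟩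
            (t * dist x y1)
            ⟨mul_nonneg ht0 dist_nonneg, mul_le_of_le_one_left dist_nonneg ht1⟩
          rw [this, ← sub_mul, abs_mul, abs_of_nonneg dist_nonneg]
        have e2 : dist (B.c x y1 (t * dist x y1)) (B.c x y2 (t * dist x y2))
            ≤ γ * t * dist y1 y2 := B.convex x y1 y2 t ⟨ht0, ht1⟩
        have e3 : dist (B.c x y2 (t * dist x y2)) (B.c x y2 (s * dist x y2))
            = |t - s| * dist x y2 := by
          have := B.isometry x y2 (t * dist x y2)
            ⟨mul_nonneg ht0 dist_nonneg, mul_le_of_le_one_left dist_nonneg ht1⟩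
            (s * dist x y2)
            ⟨mul_nonneg hs0 dist_nonneg, mul_le_of_le_one_left dist_nonneg hb1⟩
          rw [this, ← sub_mul, abs_mul, abs_of_nonneg dist_nonneg]
        have tri : dist (B.c x y1 (r * dist x y1)) (B.c x y2 (s * dist x y2))
            ≤ |r - t| * dist x y1 + γ * t * dist y1 y2 + |t - s| * dist x y2 := by
          calc dist (B.c x y1 (r * dist x y1)) (B.c x y2 (s * dist x y2))
              ≤ dist (B.c x y1 (r * dist x y1)) (B.c x y1 (t * dist x y1))
                + dist (B.c x y1 (t * dist x y1)) (B.c x y2 (t * dist x y2))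
                + dist (B.c x y2 (t * dist x y2)) (B.c x y2 (s * dist x y2)) :=
              dist_triangle4 _ _ _ _
            _ ≤ |r - t| * dist x y1 + γ * t * dist y1 y2 + |t - s| * dist x y2 := by
                rw [e1, e3]; exact add_le_add (add_le_add le_rfl e2) le_rfl
        have habs : |r - t| + |t - s| = |r - s| := by
          rcases le_total r s with h | h
          · rw [htdef, min_eq_left h]
            rw [abs_of_nonpos (by linarith), abs_of_nonpos (by linarith)]; simp
          · rw [htdef, min_eq_right h]
            rw [abs_of_nonneg (by linarith), abs_of_nonneg (by linarith)]; simp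
        -- geometric bounds
        have hsm : (a : EuclideanSpace ℝ (Fin (m+1)))
            = r • ((va : ↥(Metric.sphere (0 : EuclideanSpace ℝ (Fin (m+1))) 1)) :
              EuclideanSpace ℝ (Fin (m+1))) := by
          rw [hvadef]
          simp only [Subtype.coe_mk]
          rw [smul_smul, mul_inv_cancel₀ (norm_ne_zero_iff.mpr ha), one_smul]
        have hsmb : (b : EuclideanSpace ℝ (Fin (m+1)))
            = s • ((vb : ↥(Metric.sphere (0 : EuclideanSpace ℝ (Fin (m+1))) 1)) :
              EuclideanSpace ℝ (Fin (m+1))) := by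
          rw [hvbdef]
          simp only [Subtype.coe_mk]
          rw [smul_smul, mul_inv_cancel₀ (norm_ne_zero_iff.mpr hb), one_smul]
        have hnva : ‖((va : ↥(Metric.sphere (0 : EuclideanSpace ℝ (Fin (m+1))) 1)) :
            EuclideanSpace ℝ (Fin (m+1)))‖ = 1 := mem_sphere_zero_iff_norm.mp va.2
        have hnvb : ‖((vb : ↥(Metric.sphere (0 : EuclideanSpace ℝ (Fin (m+1))) 1)) :
            EuclideanSpace ℝ (Fin (m+1)))‖ = 1 := mem_sphere_zero_iff_norm.mp vb.2
        have hgeo : t * ‖((va : _) : EuclideanSpace ℝ (Fin (m+1)))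
            - ((vb : _) : EuclideanSpace ℝ (Fin (m+1)))‖ ≤ dist a b := by
          rw [hd, hsm, hsmb]
          exact min_mul_norm_le _ _ hnva hnvb hr0 hs0
        have hdvab : dist va vb = ‖((va : _) : EuclideanSpace ℝ (Fin (m+1)))
            - ((vb : _) : EuclideanSpace ℝ (Fin (m+1)))‖ := by
          rw [Subtype.dist_eq, dist_eq_norm]
        have habsd : |r - s| ≤ dist a b := by
          rw [hd]
          exact abs_norm_sub_norm_le _ _
        have hy12 : dist y1 y2 ≤ K * dist va vb := hσ₀' i
        -- put it together
        have hKd : γ * t * dist y1 y2 ≤ γ * K * dist a b := by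
          have hγ0 : (0:ℝ) ≤ γ := by linarith
          have h1 : γ * t * dist y1 y2 ≤ γ * t * (K * dist va vb) :=
            mul_le_mul_of_nonneg_left hy12 (mul_nonneg hγ0 ht0)
          have h2 : t * dist va vb ≤ dist a b := by rw [hdvab]; exact hgeo
          calc γ * t * dist y1 y2 ≤ γ * t * (K * dist va vb) := h1
            _ = γ * K * (t * dist va vb) := by ring
            _ ≤ γ * K * dist a b := mul_le_mul_of_nonneg_left h2 (mul_nonneg hγ0 hK)
        have hMd : |r - t| * dist x y1 + |t - s| * dist x y2 ≤ M * dist a b := by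
          have h1 : |r - t| * dist x y1 ≤ |r - t| * M :=
            mul_le_mul_of_nonneg_left hl1M (abs_nonneg _)
          have h2 : |t - s| * dist x y2 ≤ |t - s| * M :=
            mul_le_mul_of_nonneg_left hl2M (abs_nonneg _)
          have h3 : |r - t| * M + |t - s| * M = |r - s| * M := by rw [← add_mul, habs]
          have h4 : |r - s| * M ≤ M * dist a b := by
            rw [mul_comm M]; exact mul_le_mul_of_nonneg_right habsd hM0
          linarith
        have final : M * dist a b + γ * K * dist a b ≤ (γ + 8 * (Q:ℝ) - 6) * K * dist a b := by
          have h5 : M + γ * K ≤ (γ + 8 * (Q:ℝ) - 6) * K := by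
            have h6 : (0:ℝ) ≤ K * ((Q:ℝ) - 1) :=
              mul_nonneg hK (by linarith)
            rw [hM]; nlinarith
          calc M * dist a b + γ * K * dist a b = (M + γ * K) * dist a b := by ring
            _ ≤ ((γ + 8 * (Q:ℝ) - 6) * K) * dist a b := mul_le_mul_of_nonneg_right h5 hd0
            _ = (γ + 8 * (Q:ℝ) - 6) * K * dist a b := by ring
        calc dist (B.c x y1 (r * dist x y1)) (B.c x y2 (s * dist x y2))
            ≤ |r - t| * dist x y1 + γ * t * dist y1 y2 + |t - s| * dist x y2 := tri
          _ ≤ M * dist a b + γ * K * dist a b := by linarith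
          _ ≤ (γ + 8 * (Q:ℝ) - 6) * K * dist a b := final
  · intro v hv
    have hvn : ‖v‖ = 1 := mem_sphere_zero_iff_norm.mp hv
    have hv0 : ¬ v = 0 := by
      intro h; rw [h, norm_zero] at hvn; norm_num at hvn
    simp only [dif_neg hv0]
    have hsub : (⟨‖v‖⁻¹ • v, hmem v hv0⟩ :
        ↥(Metric.sphere (0 : EuclideanSpace ℝ (Fin (m+1))) 1)) = ⟨v, hv⟩ :=
      Subtype.ext (by
        change ‖v‖⁻¹ • v = v
        rw [hvn, inv_one, one_smul])
    have hfun : (fun i =>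
        B.c (A ⟨‖v‖⁻¹ • v, hmem v hv0⟩ i) (f ⟨‖v‖⁻¹ • v, hmem v hv0⟩ i)
          (‖v‖ * dist (A ⟨‖v‖⁻¹ • v, hmem v hv0⟩ i) (f ⟨‖v‖⁻¹ • v, hmem v hv0⟩ i)))
        = f ⟨v, hv⟩ := by
      funext i
      rw [hsub, hvn, one_mul, B.target]
    rw [hfun]
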